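/- (Proposition 2: pathwise characterization of weak optimality.) Let M be a martingale with M_0 = 0 and fix 0 ≤ j ≤ J. Then M ∈ M^{∘,j} if and only if for every stopping time τ taking values in {j,…,J} that is optimal, i.e. Y*_j = E[Z_τ | F_j] almost surely, one has max_{j ≤ r ≤ J} (Z_r − M_r) = Z_τ − M_τ almost surely. -/

import Mathlib

/-!
Write `X = Z - M` and `S = max_{j ≤ r ≤ J} X r`. For a stopping time `τ` with values in
`{j, …, J}`, optional sampling gives `E[X τ | ℱ j] = E[Z τ | ℱ j] - M j`.

If `M` is weakly optimal at `j` and `τ` is optimal, then `E[S | ℱ j] = Y j - M j = E[X τ | ℱ j]`;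
since `X τ ≤ S` pointwise, equal conditional expectations force `X τ = S` a.s.

Conversely, the first time `τ⋆ k ≥ k` at which the Snell envelope meets the reward is optimal,
by backward induction on `k`: `Z (τ⋆ k)` is `Z k` on `{Y k = Z k}` and `Z (τ⋆ (k + 1))` off it,
matching the Snell recursion, in which `Y k = E[Y (k + 1) | ℱ k]` off `{Y k = Z k}`. Applied to
`τ⋆ j`, the hypothesis gives `S = X (τ⋆ j)` a.s., hence `E[S + M j | ℱ j] = E[Z (τ⋆ j) | ℱ j] = Y j`.
-/

open MeasureTheory Finset Filter

namespace MeasureTheory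

variable {Ω : Type*} {m mΩ : MeasurableSpace Ω} {μ : Measure Ω}

theorem Integrable.finset_sup' {ι β : Type*} [NormedAddCommGroup β] [Lattice β] [HasSolidNorm β]
    [IsOrderedAddMonoid β] {s : Finset ι} (hs : s.Nonempty) {f : ι → Ω → β}
    (hf : ∀ i ∈ s, Integrable (f i) μ) : Integrable (fun ω => s.sup' hs fun i => f i ω) μ := by
  have h := Finset.sup'_induction (p := (Integrable · μ)) hs f (fun _ h₁ _ h₂ => h₁.sup h₂) hf
  rwa [show s.sup' hs f = _ from funext (Finset.sup'_apply hs f)] at h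

theorem condExp_piecewise {E : Type*} [NormedAddCommGroup E] [NormedSpace ℝ E] [CompleteSpace E]
    (hm : m ≤ mΩ) {s : Set Ω} [DecidablePred (· ∈ s)] {f g : Ω → E} (hs : MeasurableSet[m] s)
    (hf : Integrable f μ) (hg : Integrable g μ) :
    μ[s.piecewise f g | m] =ᵐ[μ] s.piecewise (μ[f | m]) (μ[g | m]) := by
  rw [← Set.indicator_add_compl_eq_piecewise, ← Set.indicator_add_compl_eq_piecewise]
  refine (condExp_add (hf.indicator (hm s hs)) (hg.indicator (hm _ hs.compl)) m).trans ?_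
  exact (condExp_indicator hf hs).add (condExp_indicator hg hs.compl)

theorem ae_eq_of_ae_le_of_condExp_ae_eq (hm : m ≤ mΩ) [SigmaFinite (μ.trim hm)] {f g : Ω → ℝ}
    (hf : Integrable f μ) (hg : Integrable g μ) (hfg : f ≤ᵐ[μ] g) (h : μ[f | m] =ᵐ[μ] μ[g | m]) :
    f =ᵐ[μ] g :=
  (integral_eq_iff_of_ae_le hf hg hfg).1 <| by
    rw [← integral_condExp hm, integral_congr_ae h, integral_condExp hm]

theorem hittingBtwn_congr {β ι : Type*} [ConditionallyCompleteLinearOrder ι]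
    {u v : ι → Ω → β} {s : Set β} {n n' : ι} (h : ∀ i ∈ Set.Icc n n', u i = v i) :
    hittingBtwn u s n n' = hittingBtwn v s n n' := by
  ext ω
  have hmem : ∀ i ∈ Set.Icc n n', (u i ω ∈ s ↔ v i ω ∈ s) := fun i hi => by rw [h i hi]
  have hset : Set.Icc n n' ∩ {i | u i ω ∈ s} = Set.Icc n n' ∩ {i | v i ω ∈ s} :=
    Set.ext fun i => and_congr_right (hmem i)
  have hex : (∃ i ∈ Set.Icc n n', u i ω ∈ s) ↔ ∃ i ∈ Set.Icc n n', v i ω ∈ s :=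
    exists_congr fun i => and_congr_right (hmem i)
  simp only [hittingBtwn, hset]
  congr 1
  exact propext hex

variable {ℱ : Filtration ℕ mΩ}

/-- Freezing `u` after `N` makes it adapted without changing the hitting time. -/
theorem isStoppingTime_hittingBtwn_of_measurable {β : Type*} {mβ : MeasurableSpace β}
    {u : ℕ → Ω → β} {s : Set β} {n N : ℕ} (hu : ∀ i ≤ N, Measurable[ℱ i] (u i))
    (hs : MeasurableSet s) :
    IsStoppingTime ℱ (fun ω => ((hittingBtwn u s n N ω : ℕ) : WithTop ℕ)) := by
  have hfrozen : Adapted ℱ fun i => u (min i N) := fun i =>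
    (hu _ (min_le_right i N)).mono (ℱ.mono (min_le_left i N)) le_rfl
  rw [hittingBtwn_congr (v := fun i => u (min i N)) fun i hi => by rw [min_eq_left hi.2]]
  exact hfrozen.isStoppingTime_hittingBtwn hs

theorem integrable_apply_stoppingTime {E : Type*} [NormedAddCommGroup E] {X : ℕ → Ω → E}
    (hX : ∀ n, Integrable (X n) μ) {τ : Ω → ℕ} (hτ : IsStoppingTime ℱ fun ω => (τ ω : WithTop ℕ))
    {N : ℕ} (hτN : ∀ ω, τ ω ≤ N) :
    Integrable (fun ω => X (τ ω) ω) μ :=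
  integrable_stoppedValue ℕ hτ hX fun ω => WithTop.coe_le_coe.2 (hτN ω)

namespace Martingale

variable [IsFiniteMeasure μ] {E : Type*} [NormedAddCommGroup E] [NormedSpace ℝ E]
  [CompleteSpace E] {M : ℕ → Ω → E} {τ : Ω → ℕ} {j J : ℕ}

theorem condExp_apply_stoppingTime_ae_eq (hM : Martingale M ℱ μ)
    (hτ : IsStoppingTime ℱ fun ω => (τ ω : WithTop ℕ)) (hτb : ∀ ω, j ≤ τ ω ∧ τ ω ≤ J) :
    μ[fun ω => M (τ ω) ω | ℱ j] =ᵐ[μ] M j := by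
  have h := hM.stoppedValue_ae_eq_condExp_of_le hτ (isStoppingTime_const ℱ j)
    (fun ω => WithTop.coe_le_coe.2 (hτb ω).1) (fun ω => WithTop.coe_le_coe.2 (hτb ω).2)
  rw [IsStoppingTime.measurableSpace_const] at h
  exact h.symm

theorem condExp_sub_apply_stoppingTime_ae_eq (hM : Martingale M ℱ μ) {Z : ℕ → Ω → E}
    (hZ_int : ∀ n, Integrable (Z n) μ) (hτ : IsStoppingTime ℱ fun ω => (τ ω : WithTop ℕ))
    (hτb : ∀ ω, j ≤ τ ω ∧ τ ω ≤ J) :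
    μ[fun ω => Z (τ ω) ω - M (τ ω) ω | ℱ j] =ᵐ[μ] μ[fun ω => Z (τ ω) ω | ℱ j] - M j := by
  have hτJ : ∀ ω, τ ω ≤ J := fun ω => (hτb ω).2
  exact (condExp_sub (integrable_apply_stoppingTime hZ_int hτ hτJ)
    (integrable_apply_stoppingTime hM.integrable hτ hτJ) _).trans
    (EventuallyEq.rfl.sub (hM.condExp_apply_stoppingTime_ae_eq hτ hτb))

end Martingale

end MeasureTheory

section SnellEnvelope

variable {Ω : Type*} {mΩ : MeasurableSpace Ω}

structure IsSnellEnvelope (μ : Measure Ω) (ℱ : Filtration ℕ mΩ) (J : ℕ) (Z Y : ℕ → Ω → ℝ) :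
    Prop where
  terminal : ∀ ω, Y J ω = Z J ω
  backward : ∀ j < J, ∀ ω, Y j ω = max (Z j ω) (μ[Y (j + 1) | ℱ j] ω)

/-- The first time in `[k, J]` at which `Y` meets `Z`. `hittingBtwn` defaults to `J` when there
is no such time, but `Y J = Z J` rules that case out. -/
noncomputable def snellStoppingTime (Y Z : ℕ → Ω → ℝ) (J k : ℕ) : Ω → ℕ :=
  hittingBtwn (Y - Z) {0} k J

variable {μ : Measure Ω} {ℱ : Filtration ℕ mΩ} {J k : ℕ} {Z Y : ℕ → Ω → ℝ} {ω : Ω}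

theorem snellStoppingTime_mem_Icc (hk : k ≤ J) (ω : Ω) :
    snellStoppingTime Y Z J k ω ∈ Set.Icc k J :=
  hittingBtwn_mem_Icc hk ω

theorem apply_snellStoppingTime (hYJ : Y J ω = Z J ω) (hk : k ≤ J) :
    Y (snellStoppingTime Y Z J k ω) ω = Z (snellStoppingTime Y Z J k ω) ω := by
  have hJ : ∃ i ∈ Set.Icc k J, (Y - Z) i ω ∈ ({0} : Set ℝ) := ⟨J, ⟨hk, le_rfl⟩, by simp [hYJ]⟩
  exact sub_eq_zero.1 (stoppedValue_hittingBtwn_mem hJ)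

theorem snellStoppingTime_eq_self (hk : k ≤ J) (h : Y k ω = Z k ω) :
    snellStoppingTime Y Z J k ω = k :=
  le_antisymm (hittingBtwn_le_of_mem le_rfl hk (by simp [h])) (le_hittingBtwn hk ω)

theorem snellStoppingTime_eq_succ (hYJ : Y J ω = Z J ω) (hk : k < J) (h : Y k ω ≠ Z k ω) :
    snellStoppingTime Y Z J k ω = snellStoppingTime Y Z J (k + 1) ω := by
  obtain ⟨hkτ, hτJ⟩ := snellStoppingTime_mem_Icc (Y := Y) (Z := Z) hk.le ω
  obtain ⟨hkτ', hτJ'⟩ := snellStoppingTime_mem_Icc (Y := Y) (Z := Z) (k := k + 1) hk ω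
  have hne : snellStoppingTime Y Z J k ω ≠ k := fun heq =>
    h (heq ▸ apply_snellStoppingTime hYJ hk.le)
  refine le_antisymm ?_ ?_
  · exact hittingBtwn_le_of_mem (by omega) hτJ' (by simp [apply_snellStoppingTime hYJ hk])
  · exact hittingBtwn_le_of_mem (by omega) hτJ (by simp [apply_snellStoppingTime hYJ hk.le])

namespace IsSnellEnvelope

theorem measurable (hY : IsSnellEnvelope μ ℱ J Z Y) (hZ : Adapted ℱ Z) (hk : k ≤ J) :
    Measurable[ℱ k] (Y k) := by
  rcases hk.lt_or_eq with hk | rfl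
  · rw [funext (hY.backward k hk)]
    exact (hZ k).max stronglyMeasurable_condExp.measurable
  · rw [funext hY.terminal]
    exact hZ k

theorem isStoppingTime_snellStoppingTime (hY : IsSnellEnvelope μ ℱ J Z Y) (hZ : Adapted ℱ Z) :
    IsStoppingTime ℱ fun ω => (snellStoppingTime Y Z J k ω : WithTop ℕ) :=
  isStoppingTime_hittingBtwn_of_measurable (fun _ hi => (hY.measurable hZ hi).sub (hZ _))
    (measurableSet_singleton 0)

theorem eq_condExp_of_ne (hY : IsSnellEnvelope μ ℱ J Z Y) (hk : k < J) (h : Y k ω ≠ Z k ω) :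
    Y k ω = μ[Y (k + 1) | ℱ k] ω := by
  rcases max_choice (Z k ω) (μ[Y (k + 1) | ℱ k] ω) with hZ | hc
  · exact absurd ((hY.backward k hk ω).trans hZ) h
  · exact (hY.backward k hk ω).trans hc

theorem condExp_snellStoppingTime [IsFiniteMeasure μ] (hY : IsSnellEnvelope μ ℱ J Z Y)
    (hZ : Adapted ℱ Z) (hZ_int : ∀ k, Integrable (Z k) μ) (hk : k ≤ J) :
    μ[fun ω => Z (snellStoppingTime Y Z J k ω) ω | ℱ k] =ᵐ[μ] Y k := by
  induction hk using Nat.decreasingInduction with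
  | self =>
    have hZτ : (fun ω => Z (snellStoppingTime Y Z J J ω) ω) = Y J := funext fun ω => by
      rw [snellStoppingTime_eq_self le_rfl (hY.terminal ω), hY.terminal ω]
    rw [hZτ, funext hY.terminal]
    exact .of_eq (condExp_of_stronglyMeasurable (ℱ.le J) (hZ J).stronglyMeasurable (hZ_int J))
  | of_succ k hk ih =>
    classical
    let A := {ω | Y k ω = Z k ω}
    have hA : MeasurableSet[ℱ k] A := measurableSet_eq_fun (hY.measurable hZ hk.le) (hZ k)
    have hZτ : (fun ω => Z (snellStoppingTime Y Z J k ω) ω)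
        = A.piecewise (Z k) fun ω => Z (snellStoppingTime Y Z J (k + 1) ω) ω := by
      ext ω
      by_cases h : Y k ω = Z k ω
      · simp [A, h, snellStoppingTime_eq_self hk.le h]
      · simp [A, h, snellStoppingTime_eq_succ (hY.terminal ω) hk h]
    have hint : Integrable (fun ω => Z (snellStoppingTime Y Z J (k + 1) ω) ω) μ :=
      integrable_apply_stoppingTime hZ_int (hY.isStoppingTime_snellStoppingTime hZ)
        fun ω => (snellStoppingTime_mem_Icc hk ω).2
    have htower : μ[fun ω => Z (snellStoppingTime Y Z J (k + 1) ω) ω | ℱ k]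
        =ᵐ[μ] μ[Y (k + 1) | ℱ k] :=
      (condExp_condExp_of_le (ℱ.mono k.le_succ) (ℱ.le (k + 1))).symm.trans (condExp_congr_ae ih)
    rw [hZτ]
    refine (condExp_piecewise (ℱ.le k) hA (hZ_int k) hint).trans ?_
    rw [condExp_of_stronglyMeasurable (ℱ.le k) (hZ k).stronglyMeasurable (hZ_int k)]
    filter_upwards [htower] with ω hω
    by_cases h : ω ∈ A
    · rw [Set.piecewise_eq_of_mem _ _ _ h]
      exact h.symm
    · rw [Set.piecewise_eq_of_notMem _ _ _ h, hω, hY.eq_condExp_of_ne hk h]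

end IsSnellEnvelope

end SnellEnvelope

theorem weakly_optimal_iff_attained_at_optimal_stopping_times_general
    {Ω : Type*} {mΩ : MeasurableSpace Ω} {μ : Measure Ω} [IsProbabilityMeasure μ]
    (J : ℕ) (ℱ : Filtration ℕ mΩ)
    (Z Y : ℕ → Ω → ℝ)
    (hZ_adapted : Adapted ℱ Z)
    (hZ_int : ∀ j, Integrable (Z j) μ)
    (hYJ : ∀ ω, Y J ω = Z J ω)
    (hY : ∀ j, j < J → ∀ ω, Y j ω = max (Z j ω) ((μ[Y (j + 1) | ℱ j]) ω))
    (M : ℕ → Ω → ℝ) (hM : Martingale M ℱ μ)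
    (j : ℕ) (hj : j ≤ J) :
    (Y j =ᵐ[μ] μ[fun ω => (Finset.Icc j J).sup' (Finset.nonempty_Icc.mpr hj)
        (fun r => Z r ω - M r ω + M j ω) | ℱ j])
    ↔
    (∀ τ : Ω → ℕ, IsStoppingTime ℱ (fun ω => (τ ω : WithTop ℕ)) → (∀ ω, j ≤ τ ω ∧ τ ω ≤ J) →
      (Y j =ᵐ[μ] μ[fun ω => Z (τ ω) ω | ℱ j]) →
      ∀ᵐ ω ∂μ, (Finset.Icc j J).sup' (Finset.nonempty_Icc.mpr hj)
        (fun r => Z r ω - M r ω) = Z (τ ω) ω - M (τ ω) ω) := by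
  set S : Ω → ℝ := fun ω => (Icc j J).sup' (nonempty_Icc.mpr hj) fun r => Z r ω - M r ω
  have hS_int : Integrable S μ :=
    Integrable.finset_sup' _ fun r _ => (hZ_int r).sub (hM.integrable r)
  have hS_add : (fun ω => (Icc j J).sup' (nonempty_Icc.mpr hj) fun r => Z r ω - M r ω + M j ω)
      = S + M j := funext fun ω => (sup'_add _ _ _ _).symm
  have hcondExp_S : μ[S + M j | ℱ j] =ᵐ[μ] μ[S | ℱ j] + M j := by
    refine (condExp_add hS_int (hM.integrable j) _).trans (.of_eq ?_)
    rw [condExp_of_stronglyMeasurable (ℱ.le j) (hM.stronglyAdapted j) (hM.integrable j)]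
  rw [hS_add]
  constructor
  · intro hopt τ hτ hτb hτopt
    refine (ae_eq_of_ae_le_of_condExp_ae_eq (ℱ.le j)
      (integrable_apply_stoppingTime (X := fun r ω => Z r ω - M r ω)
        (fun r => (hZ_int r).sub (hM.integrable r)) hτ fun ω => (hτb ω).2) hS_int
      (.of_forall fun ω => le_sup' (fun r => Z r ω - M r ω) (mem_Icc.2 (hτb ω))) ?_).symm
    filter_upwards [hM.condExp_sub_apply_stoppingTime_ae_eq hZ_int hτ hτb, hτopt, hopt,
      hcondExp_S] with ω h₁ h₂ h₃ h₄
    simp only [Pi.add_apply, Pi.sub_apply] at h₁ h₄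
    linarith
  · intro hattained
    have hSnell : IsSnellEnvelope μ ℱ J Z Y := ⟨hYJ, hY⟩
    have hτ := hSnell.isStoppingTime_snellStoppingTime (k := j) hZ_adapted
    have hτb := snellStoppingTime_mem_Icc (Y := Y) (Z := Z) hj
    have hτopt := hSnell.condExp_snellStoppingTime hZ_adapted hZ_int hj
    filter_upwards [hcondExp_S, condExp_congr_ae (m := ℱ j) (hattained _ hτ hτb hτopt.symm),
      hM.condExp_sub_apply_stoppingTime_ae_eq hZ_int hτ hτb, hτopt] with ω h₁ h₂ h₃ h₄
    simp only [Pi.add_apply, Pi.sub_apply] at h₁ h₃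
    linarith

/-- **Proposition 2: pathwise characterization of weak optimality.**
Let `M` be a martingale with `M 0 = 0` and fix `0 ≤ j ≤ J`. Then `M` is weakly optimal at `j`
if and only if for every stopping time `τ` taking values in `{j,…,J}` that is optimal, i.e.
`Y⋆ j = E[Z τ | ℱ j]` a.s., one has `max_{j ≤ r ≤ J} (Z r − M r) = Z τ − M τ` a.s. -/
theorem weakly_optimal_iff_attained_at_optimal_stopping_times
    {Ω : Type*} {mΩ : MeasurableSpace Ω} {μ : Measure Ω} [IsProbabilityMeasure μ]
    (J : ℕ) (ℱ : Filtration ℕ mΩ)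
    (Z Y : ℕ → Ω → ℝ)
    (hZ_adapted : Adapted ℱ Z)
    (hZ_int : ∀ j, Integrable (Z j) μ)
    (hYJ : ∀ ω, Y J ω = Z J ω)
    (hY : ∀ j, j < J → ∀ ω, Y j ω = max (Z j ω) ((μ[Y (j + 1) | ℱ j]) ω))
    (M : ℕ → Ω → ℝ) (hM : Martingale M ℱ μ) (hM0 : ∀ ω, M 0 ω = 0)
    (j : ℕ) (hj : j ≤ J) :
    (Y j =ᵐ[μ] μ[fun ω => (Finset.Icc j J).sup' (Finset.nonempty_Icc.mpr hj)
        (fun r => Z r ω - M r ω + M j ω) | ℱ j])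
    ↔
    (∀ τ : Ω → ℕ, IsStoppingTime ℱ (fun ω => (τ ω : WithTop ℕ)) → (∀ ω, j ≤ τ ω ∧ τ ω ≤ J) →
      (Y j =ᵐ[μ] μ[fun ω => Z (τ ω) ω | ℱ j]) →
      ∀ᵐ ω ∂μ, (Finset.Icc j J).sup' (Finset.nonempty_Icc.mpr hj)
        (fun r => Z r ω - M r ω) = Z (τ ω) ω - M (τ ω) ω) :=
  weakly_optimal_iff_attained_at_optimal_stopping_times_general J ℱ Z Y hZ_adapted hZ_int hYJ hY M
    hM j hj
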